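/- arXiv:1302.6390 — 4 statements merged into one kernel-verified Lean document; each statement's English description precedes it below -/
import Mathlib

section
/- Let v ∈ ℝᵖ, A ⊆ {1,…,p} with |A| = s, and let K be a p×p positive semi-definite matrix satisfying zᵀKz ≥ ψ Σ_{j∈A} z_j² for all z in the cone {z : Σ_{j∉A}|z_j| ≤ c Σ_{j∈A}|z_j|} (ψ > 0, c ≥ 0). If v lies in this cone and vᵀKv + (λ/2)‖v‖₁ ≤ 2λ m √s · (Σ_{j∈A} v_j²)^{1/2} for constants λ > 0 and m > 0, then vᵀKv ≤ 4 ψ^{-1} λ² m² s and ‖v‖₁ ≤ 8 ψ^{-1} λ m² s. -/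
/-!
Write `Q = vᵀKv`, `t = (∑_{j∈A} v_j²)^{1/2}` and `B = 2λm√s`. The restricted eigenvalue condition
gives `ψ t² ≤ Q`, and the hypothesis gives `Q + (λ/2)‖v‖₁ ≤ B t`; hence `ψ t² ≤ B t`, which forces
`B t ≤ B² / ψ` since `B² - ψ B t = (B - ψ t)² + ψ (B t - ψ t²)`. Both `Q` and `(λ/2)‖v‖₁` are at
most `B t`, and `B² = 4λ²m²s`.
-/

theorem mul_le_inv_mul_sq_of_mul_sq_le {ψ B t : ℝ} (hψ : 0 < ψ) (h : ψ * t ^ 2 ≤ B * t) :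
    B * t ≤ ψ⁻¹ * B ^ 2 :=
  (le_inv_mul_iff₀ hψ).mpr (by nlinarith [sq_nonneg (B - ψ * t)])

theorem le_inv_mul_sq_of_mul_sq_le_of_add_le {Q P t B ψ : ℝ} (hψ : 0 < ψ) (hP : 0 ≤ P)
    (hQ : ψ * t ^ 2 ≤ Q) (h : Q + P ≤ B * t) :
    Q ≤ ψ⁻¹ * B ^ 2 ∧ P ≤ ψ⁻¹ * B ^ 2 := by
  have hQ0 : 0 ≤ Q := le_trans (by positivity) hQ
  have hBt : B * t ≤ ψ⁻¹ * B ^ 2 := mul_le_inv_mul_sq_of_mul_sq_le hψ (by linarith)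
  constructor <;> linarith

theorem stmt_9_general {p : ℕ} (K : Matrix (Fin p) (Fin p) ℝ)
    (A : Finset (Fin p)) (s : ℕ)
    (ψ c lam m : ℝ) (hψ : 0 < ψ) (hlam : 0 < lam)
    (hRE : ∀ z : Fin p → ℝ,
      (∑ j ∈ Finset.univ \ A, |z j| ≤ c * ∑ j ∈ A, |z j|) →
        ψ * ∑ j ∈ A, (z j) ^ 2 ≤ ∑ j, z j * K.mulVec z j)
    (v : Fin p → ℝ)
    (hv : ∑ j ∈ Finset.univ \ A, |v j| ≤ c * ∑ j ∈ A, |v j|)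
    (hineq : (∑ j, v j * K.mulVec v j) + lam / 2 * ∑ j, |v j| ≤
        2 * lam * m * Real.sqrt s * Real.sqrt (∑ j ∈ A, (v j) ^ 2)) :
    (∑ j, v j * K.mulVec v j) ≤ 4 * ψ⁻¹ * lam ^ 2 * m ^ 2 * s ∧
      (∑ j, |v j|) ≤ 8 * ψ⁻¹ * lam * m ^ 2 * s := by
  have hRE_v : ψ * (Real.sqrt (∑ j ∈ A, (v j) ^ 2)) ^ 2 ≤ ∑ j, v j * K.mulVec v j := by
    rw [Real.sq_sqrt (Finset.sum_nonneg fun j _ => sq_nonneg _)]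
    exact hRE v hv
  have hB : (2 * lam * m * Real.sqrt s) ^ 2 = 4 * lam ^ 2 * m ^ 2 * s := by
    rw [mul_pow, Real.sq_sqrt (Nat.cast_nonneg s)]
    ring
  have hpen : 0 ≤ lam / 2 * ∑ j, |v j| :=
    mul_nonneg (half_pos hlam).le (Finset.sum_nonneg fun j _ => abs_nonneg (v j))
  obtain ⟨hQ, hL⟩ := le_inv_mul_sq_of_mul_sq_le_of_add_le hψ hpen hRE_v hineq
  rw [hB] at hQ hL
  refine ⟨by linarith, le_of_mul_le_mul_left (hL.trans_eq ?_) (half_pos hlam)⟩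
  ring

theorem stmt_9 {p : ℕ} (K : Matrix (Fin p) (Fin p) ℝ) (hK : K.PosSemidef)
    (A : Finset (Fin p)) (s : ℕ) (hs : A.card = s)
    (ψ c lam m : ℝ) (hψ : 0 < ψ) (hc : 0 ≤ c) (hlam : 0 < lam) (hm : 0 < m)
    (hRE : ∀ z : Fin p → ℝ,
      (∑ j ∈ Finset.univ \ A, |z j| ≤ c * ∑ j ∈ A, |z j|) →
        ψ * ∑ j ∈ A, (z j) ^ 2 ≤ ∑ j, z j * K.mulVec z j)
    (v : Fin p → ℝ)
    (hv : ∑ j ∈ Finset.univ \ A, |v j| ≤ c * ∑ j ∈ A, |v j|)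
    (hineq : (∑ j, v j * K.mulVec v j) + lam / 2 * ∑ j, |v j| ≤
        2 * lam * m * Real.sqrt s * Real.sqrt (∑ j ∈ A, (v j) ^ 2)) :
    (∑ j, v j * K.mulVec v j) ≤ 4 * ψ⁻¹ * lam ^ 2 * m ^ 2 * s ∧
      (∑ j, |v j|) ≤ 8 * ψ⁻¹ * lam * m ^ 2 * s :=
  stmt_9_general K A s ψ c lam m hψ hlam hRE v hv hineq
end

section
/- Suppose β̂ satisfies the stationarity equations −2 x_iᵀ(y − Xβ̂) + λ₁* ŵ_i sign(β̂_i) + 2λ₂ Σ_k q_{ik} β̂_k = 0 for indices i and j with β̂_i β̂_j > 0 (hence sign(β̂_i) = sign(β̂_j)). Then λ₂ |Σ_k (q_{ik} − q_{jk}) β̂_k| ≤ ‖x_i − x_j‖₂ ‖y − Xβ̂‖₂ + (λ₁*/2)|ŵ_i − ŵ_j|. -/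
namespace Real

lemma sign_eq_sign_of_mul_pos {a b : ℝ} (h : 0 < a * b) : sign a = sign b := by
  rcases pos_and_pos_or_neg_and_neg_of_mul_pos h with ⟨ha, hb⟩ | ⟨ha, hb⟩
  · rw [sign_of_pos ha, sign_of_pos hb]
  · rw [sign_of_neg ha, sign_of_neg hb]

lemma abs_mul_sign_le (a r : ℝ) : |a * sign r| ≤ |a| := by
  rcases sign_apply_eq r with h | h | h <;> simp [h]

lemma abs_sum_mul_le_sqrt_mul_sqrt {ι : Type*} (s : Finset ι) (f g : ι → ℝ) :
    |∑ i ∈ s, f i * g i| ≤ √(∑ i ∈ s, f i ^ 2) * √(∑ i ∈ s, g i ^ 2) := by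
  rw [← sqrt_mul (s.sum_nonneg fun i _ => sq_nonneg (f i))]
  exact abs_le_sqrt (Finset.sum_mul_sq_le_sq_mul_sq s f g)

end Real

theorem stmt_15_general {n p : ℕ} (X : Matrix (Fin n) (Fin p) ℝ) (y : Fin n → ℝ)
    (Q : Matrix (Fin p) (Fin p) ℝ)
    (l1 l2 : ℝ) (hl1 : 0 < l1) (hl2 : 0 < l2)
    (w : Fin p → ℝ)
    (βh : Fin p → ℝ) (i j : Fin p) (hij : 0 < βh i * βh j)
    (hstati : -2 * (∑ l, X l i * (y l - X.mulVec βh l)) +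
        l1 * w i * Real.sign (βh i) + 2 * l2 * ∑ k, Q i k * βh k = 0)
    (hstatj : -2 * (∑ l, X l j * (y l - X.mulVec βh l)) +
        l1 * w j * Real.sign (βh j) + 2 * l2 * ∑ k, Q j k * βh k = 0) :
    l2 * |∑ k, (Q i k - Q j k) * βh k| ≤
      Real.sqrt (∑ l, (X l i - X l j) ^ 2) *
          Real.sqrt (∑ l, (y l - X.mulVec βh l) ^ 2) +
        l1 / 2 * |w i - w j| := by
  have hdiff : l2 * ∑ k, (Q i k - Q j k) * βh k =
      ∑ l, (X l i - X l j) * (y l - X.mulVec βh l) -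
        l1 / 2 * (w i - w j) * Real.sign (βh i) := by
    rw [Real.sign_eq_sign_of_mul_pos hij] at hstati ⊢
    simp only [sub_mul, Finset.sum_sub_distrib]
    linarith
  calc l2 * |∑ k, (Q i k - Q j k) * βh k|
      = |∑ l, (X l i - X l j) * (y l - X.mulVec βh l) -
          l1 / 2 * (w i - w j) * Real.sign (βh i)| := by
        rw [← hdiff, abs_mul, abs_of_pos hl2]
    _ ≤ |∑ l, (X l i - X l j) * (y l - X.mulVec βh l)| +
          |l1 / 2 * (w i - w j) * Real.sign (βh i)| := abs_sub _ _
    _ ≤ _ := by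
        gcongr
        · exact Real.abs_sum_mul_le_sqrt_mul_sqrt _ _ _
        · exact (Real.abs_mul_sign_le _ _).trans_eq
            (by rw [abs_mul, abs_of_pos (half_pos hl1)])

theorem stmt_15 {n p : ℕ} (X : Matrix (Fin n) (Fin p) ℝ) (y : Fin n → ℝ)
    (Q : Matrix (Fin p) (Fin p) ℝ) (hQsym : Q.transpose = Q)
    (l1 l2 : ℝ) (hl1 : 0 < l1) (hl2 : 0 < l2)
    (w : Fin p → ℝ) (hw : ∀ k, 0 ≤ w k)
    (βh : Fin p → ℝ) (i j : Fin p) (hij : 0 < βh i * βh j)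
    (hstati : -2 * (∑ l, X l i * (y l - X.mulVec βh l)) +
        l1 * w i * Real.sign (βh i) + 2 * l2 * ∑ k, Q i k * βh k = 0)
    (hstatj : -2 * (∑ l, X l j * (y l - X.mulVec βh l)) +
        l1 * w j * Real.sign (βh j) + 2 * l2 * ∑ k, Q j k * βh k = 0) :
    l2 * |∑ k, (Q i k - Q j k) * βh k| ≤
      Real.sqrt (∑ l, (X l i - X l j) ^ 2) *
          Real.sqrt (∑ l, (y l - X.mulVec βh l) ^ 2) +
        l1 / 2 * |w i - w j| :=
  stmt_15_general X y Q l1 l2 hl1 hl2 w βh i j hij hstati hstatj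
end

section
/- Grouping effect for AdaCnet: with standardized predictors of equal pairwise correlation ρ (ρ² ≠ 1), if β̂ minimizes ‖y − Xβ‖₂² + λ₂ βᵀQβ + λ₁* Σ_j ŵ_j|β_j| with Q the correlation penalty matrix and ŵ_j = |β̂_j⁰|^{−γ}, and β̂_i β̂_j > 0, then (1/‖y‖₂)|β̂_j − β̂_i| ≤ ((1−ρ²)/(2(p+ρ−1)λ₂)) [√(2(1−ρ)) + (γλ₁*/(‖y‖₂ min(|β̂_i⁰|,|β̂_j⁰|)^{γ+1})) |β̂_i⁰ − β̂_j⁰| ]. -/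
/-!
At a minimiser, moving a nonzero coordinate `β k` by `|t| ≤ |β k|` keeps its sign, so the
objective is an exact quadratic in `t` and its linear coefficient vanishes:
`2 x_kᵀ (y - X β) = 2 λ₂ (Q β)_k + λ₁ w_k sgn β_k`. For an equicorrelation matrix `Q` one has
`(Q β)_i - (Q β)_j = (Q_kk - Q_kl) (β_i - β_j)`, and equal signs make the sign factors agree, so
subtracting the two equations bounds `2 λ₂ (Q_kk - Q_kl) |β_i - β_j|` by
`2 |(x_i - x_j)ᵀ (y - X β)| + λ₁ |w_i - w_j|`. Cauchy–Schwarz with `‖x_i - x_j‖² = 2 (1 - ρ)` and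
`‖y - X β‖ ≤ ‖y‖` (compare with `β = 0`, using that `Q` is positive semidefinite) bounds the
first term, and the mean value theorem for `t ↦ t ^ (-γ)` bounds the second.
-/

open Matrix

lemma eq_zero_of_forall_abs_le_nonneg_quadratic {A B δ : ℝ} (hδ : 0 < δ)
    (h : ∀ t : ℝ, |t| ≤ δ → 0 ≤ A * t ^ 2 + B * t) : B = 0 := by
  have hmin : IsLocalMin (fun t : ℝ => A * t ^ 2 + B * t) 0 := by
    filter_upwards [Metric.closedBall_mem_nhds (0 : ℝ) hδ] with t ht
    simpa using h t (by simpa using ht)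
  have hderiv : HasDerivAt (fun t : ℝ => A * t ^ 2 + B * t) B 0 :=
    ((((hasDerivAt_id' (x := (0 : ℝ))).pow 2).const_mul A).add
      ((hasDerivAt_id' (x := (0 : ℝ))).const_mul B)).congr_deriv (by simp)
  exact hmin.hasDerivAt_eq_zero hderiv

lemma abs_rpow_neg_sub_rpow_neg_le {γ a b : ℝ} (hγ : 0 ≤ γ) (ha : 0 < a) (hb : 0 < b) :
    |a ^ (-γ) - b ^ (-γ)| ≤ γ * min a b ^ (-(γ + 1)) * |a - b| := by
  have hm : 0 < min a b := lt_min ha hb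
  have hderiv : ∀ x ∈ Set.Ici (min a b), HasDerivWithinAt (fun x : ℝ => x ^ (-γ))
      (-γ * x ^ (-γ - 1)) (Set.Ici (min a b)) x := fun x hx =>
    (Real.hasDerivAt_rpow_const (Or.inl (hm.trans_le hx).ne')).hasDerivWithinAt
  have hbound : ∀ x ∈ Set.Ici (min a b), ‖-γ * x ^ (-γ - 1)‖ ≤ γ * min a b ^ (-(γ + 1)) := by
    intro x hx
    rw [norm_mul, norm_neg, Real.norm_of_nonneg hγ,
      Real.norm_of_nonneg (Real.rpow_pos_of_pos (hm.trans_le hx) _).le, neg_add']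
    exact mul_le_mul_of_nonneg_left (Real.rpow_le_rpow_of_nonpos hm hx (by linarith)) hγ
  simpa only [Real.norm_eq_abs] using (convex_Ici _).norm_image_sub_le_of_norm_hasDerivWithin_le
    hderiv hbound (min_le_right a b) (min_le_left a b)

lemma abs_abs_rpow_neg_sub_le {γ a b : ℝ} (hγ : 0 ≤ γ) (ha : a ≠ 0) (hb : b ≠ 0) :
    |(|a| ^ (-γ) - |b| ^ (-γ))| ≤ γ * min |a| |b| ^ (-(γ + 1)) * |a - b| :=
  (abs_rpow_neg_sub_rpow_neg_le hγ (abs_pos.2 ha) (abs_pos.2 hb)).trans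
    (mul_le_mul_of_nonneg_left (abs_abs_sub_abs_le_abs_sub a b) (by positivity))

lemma abs_add_eq_abs_add_sign_mul {a t : ℝ} (ht : |t| ≤ |a|) :
    |a + t| = |a| + Real.sign a * t := by
  rcases lt_trichotomy a 0 with ha | rfl | ha
  · rw [abs_of_neg ha] at ht ⊢
    rw [Real.sign_of_neg ha, abs_of_nonpos (by linarith [le_abs_self t])]
    ring
  · simp_all
  · rw [abs_of_pos ha] at ht ⊢
    rw [Real.sign_of_pos ha, abs_of_nonneg (by linarith [neg_abs_le t])]
    ring

lemma Real.sign_eq_sign_of_mul_pos_s17 {a b : ℝ} (h : 0 < a * b) : Real.sign a = Real.sign b := by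
  rcases (pos_and_pos_or_neg_and_neg_of_mul_pos h) with ⟨ha, hb⟩ | ⟨ha, hb⟩
  · rw [Real.sign_of_pos ha, Real.sign_of_pos hb]
  · rw [Real.sign_of_neg ha, Real.sign_of_neg hb]

lemma Real.abs_sign_le_one (a : ℝ) : |Real.sign a| ≤ 1 := by
  rcases Real.sign_apply_eq a with h | h | h <;> simp [h]

lemma Real.abs_sum_mul_le_sqrt_mul_sqrt_s17 {ι : Type*} (s : Finset ι) (f g : ι → ℝ) :
    |∑ i ∈ s, f i * g i| ≤ √(∑ i ∈ s, f i ^ 2) * √(∑ i ∈ s, g i ^ 2) := by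
  rw [← Real.sqrt_sq_eq_abs, ← Real.sqrt_mul (Finset.sum_nonneg fun i _ => sq_nonneg (f i))]
  exact Real.sqrt_le_sqrt (Finset.sum_mul_sq_le_sq_mul_sq s f g)

lemma sq_le_one_of_sum_sq_eq_one {ι : Type*} [Fintype ι] {u v : ι → ℝ} {ρ : ℝ}
    (hu : ∑ a, u a ^ 2 = 1) (hv : ∑ a, v a ^ 2 = 1) (huv : ∑ a, u a * v a = ρ) : ρ ^ 2 ≤ 1 := by
  simpa [hu, hv, huv] using Finset.sum_mul_sq_le_sq_mul_sq Finset.univ u v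

lemma sum_sub_sq_eq_of_sum_sq_eq_one {ι : Type*} [Fintype ι] {u v : ι → ℝ} {ρ : ℝ}
    (hu : ∑ a, u a ^ 2 = 1) (hv : ∑ a, v a ^ 2 = 1) (huv : ∑ a, u a * v a = ρ) :
    ∑ a, (u a - v a) ^ 2 = 2 * (1 - ρ) := by
  have h : ∀ a, (u a - v a) ^ 2 = u a ^ 2 - 2 * (u a * v a) + v a ^ 2 := fun a => by ring
  simp only [h, Finset.sum_add_distrib, Finset.sum_sub_distrib, ← Finset.mul_sum, hu, hv, huv]
  ring

section CompoundSymmetry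

variable {κ : Type*} {Q : Matrix κ κ ℝ} {d o : ℝ}

lemma isSymm_of_apply_of_ne (hoff : ∀ k l, k ≠ l → Q k l = o) : Q.IsSymm :=
  IsSymm.ext fun k l => by
    rcases eq_or_ne k l with rfl | h
    · rfl
    · rw [hoff k l h, hoff l k h.symm]

variable [Fintype κ]

lemma mulVec_apply_of_compoundSymm (hdiag : ∀ k, Q k k = d) (hoff : ∀ k l, k ≠ l → Q k l = o)
    (β : κ → ℝ) (a : κ) : (Q *ᵥ β) a = o * ∑ b, β b + (d - o) * β a := by
  classical
  have hQ : ∀ b, Q a b = o + if a = b then d - o else 0 := by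
    intro b
    rcases eq_or_ne a b with rfl | h
    · simp [hdiag]
    · simp [h, hoff a b h]
  simp only [mulVec, dotProduct, hQ, add_mul, ite_mul, zero_mul, Finset.sum_add_distrib,
    Finset.sum_ite_eq, Finset.mem_univ, if_true, Finset.mul_sum]

lemma dotProduct_mulVec_of_compoundSymm (hdiag : ∀ k, Q k k = d)
    (hoff : ∀ k l, k ≠ l → Q k l = o) (β : κ → ℝ) :
    β ⬝ᵥ Q *ᵥ β = o * (∑ b, β b) ^ 2 + (d - o) * ∑ b, β b ^ 2 := by
  simp only [dotProduct, mulVec_apply_of_compoundSymm hdiag hoff, mul_add, Finset.sum_add_distrib]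
  congr 1
  · rw [← Finset.sum_mul]
    ring
  · rw [Finset.mul_sum]
    exact Finset.sum_congr rfl fun b _ => by ring

lemma dotProduct_mulVec_nonneg_of_compoundSymm (hdiag : ∀ k, Q k k = d)
    (hoff : ∀ k l, k ≠ l → Q k l = o) (hdo : 0 ≤ d - o)
    (hsum : 0 ≤ d + (Fintype.card κ - 1) * o) (β : κ → ℝ) : 0 ≤ β ⬝ᵥ Q *ᵥ β := by
  rw [dotProduct_mulVec_of_compoundSymm hdiag hoff]
  have hsq : 0 ≤ ∑ b, β b ^ 2 := Finset.sum_nonneg fun b _ => sq_nonneg (β b)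
  rcases le_or_gt 0 o with ho | ho
  · positivity
  · have hcard : (∑ b, β b) ^ 2 ≤ Fintype.card κ * ∑ b, β b ^ 2 := by
      simpa using sq_sum_le_card_mul_sum_sq (s := Finset.univ) (f := β)
    nlinarith

lemma dotProduct_mulVec_nonneg_of_corrPenalty [Nontrivial κ] {ρ : ℝ} (hρ : ρ ^ 2 < 1)
    (hdiag : ∀ k, Q k k = 2 * ((Fintype.card κ : ℝ) - 1) / (1 - ρ ^ 2))
    (hoff : ∀ k l, k ≠ l → Q k l = -2 * ρ / (1 - ρ ^ 2)) (β : κ → ℝ) : 0 ≤ β ⬝ᵥ Q *ᵥ β := by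
  have hcard : (2 : ℝ) ≤ Fintype.card κ := by exact_mod_cast Fintype.one_lt_card
  have hρ' : 0 < 1 - ρ ^ 2 := sub_pos.2 hρ
  refine dotProduct_mulVec_nonneg_of_compoundSymm hdiag hoff ?_ ?_ β
  · rw [div_sub_div_same]
    exact div_nonneg (by nlinarith) hρ'.le
  · rw [show 2 * ((Fintype.card κ : ℝ) - 1) / (1 - ρ ^ 2)
        + (Fintype.card κ - 1) * (-2 * ρ / (1 - ρ ^ 2))
        = 2 * ((Fintype.card κ : ℝ) - 1) * (1 - ρ) / (1 - ρ ^ 2) by ring]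
    exact div_nonneg (mul_nonneg (by linarith) (by nlinarith)) hρ'.le

end CompoundSymmetry

section SingleCoordinate

variable {κ : Type*} [Fintype κ] [DecidableEq κ]

lemma dotProduct_mulVec_add_single {Q : Matrix κ κ ℝ} (hQ : Q.IsSymm) (β : κ → ℝ) (k : κ)
    (t : ℝ) : (β + Pi.single k t) ⬝ᵥ Q *ᵥ (β + Pi.single k t)
      = β ⬝ᵥ Q *ᵥ β + 2 * t * (Q *ᵥ β) k + t ^ 2 * Q k k := by
  have hvec : β ᵥ* Q = Q *ᵥ β := by
    conv_lhs => rw [← hQ.eq]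
    exact vecMul_transpose Q β
  have hcol : (Q *ᵥ Pi.single k t) k = Q k k * t := by simp
  rw [mulVec_add, dotProduct_add, add_dotProduct, add_dotProduct,
    dotProduct_mulVec β Q (Pi.single k t), hvec, dotProduct_single, single_dotProduct, single_dotProduct, hcol]
  ring

lemma sum_mul_abs_add_single (w β : κ → ℝ) {k : κ} {t : ℝ} (ht : |t| ≤ |β k|) :
    ∑ a, w a * |(β + Pi.single k t : κ → ℝ) a|
      = ∑ a, w a * |β a| + t * (w k * Real.sign (β k)) := by
  rw [← sub_eq_iff_eq_add', ← Finset.sum_sub_distrib, Fintype.sum_eq_single k]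
  · simp only [Pi.add_apply, Pi.single_eq_same, abs_add_eq_abs_add_sign_mul ht]
    ring
  · intro a ha
    simp [ha]

end SingleCoordinate

section AdaCnet

variable {ι κ : Type*} [Fintype ι] [Fintype κ]

def residualSumSq (X : Matrix ι κ ℝ) (y : ι → ℝ) (β : κ → ℝ) : ℝ :=
  ∑ i, (y i - (X *ᵥ β) i) ^ 2

def adaCnetObjective (X : Matrix ι κ ℝ) (y : ι → ℝ) (Q : Matrix κ κ ℝ) (l1 l2 : ℝ)
    (w β : κ → ℝ) : ℝ :=
  residualSumSq X y β + l2 * (β ⬝ᵥ Q *ᵥ β) + l1 * ∑ k, w k * |β k|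

variable (X : Matrix ι κ ℝ) (y : ι → ℝ) {Q : Matrix κ κ ℝ} (l1 l2 : ℝ) (w : κ → ℝ)

lemma residualSumSq_le_sum_sq (hl1 : 0 ≤ l1) (hl2 : 0 ≤ l2) (hw : ∀ k, 0 ≤ w k)
    (hQ : ∀ β, 0 ≤ β ⬝ᵥ Q *ᵥ β) {βh : κ → ℝ}
    (hmin : adaCnetObjective X y Q l1 l2 w βh ≤ adaCnetObjective X y Q l1 l2 w 0) :
    residualSumSq X y βh ≤ ∑ i, y i ^ 2 := by
  have hpen : 0 ≤ l1 * ∑ k, w k * |βh k| :=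
    mul_nonneg hl1 (Finset.sum_nonneg fun k _ => mul_nonneg (hw k) (abs_nonneg _))
  simp only [adaCnetObjective, residualSumSq, mulVec_zero, Pi.zero_apply, sub_zero,
    zero_dotProduct, abs_zero, mul_zero, Finset.sum_const_zero, add_zero] at hmin ⊢
  linarith [mul_nonneg hl2 (hQ βh)]

variable [DecidableEq κ]

lemma residualSumSq_add_single (β : κ → ℝ) (k : κ) (t : ℝ) :
    residualSumSq X y (β + Pi.single k t) = residualSumSq X y β
      - 2 * t * ∑ i, X i k * (y i - (X *ᵥ β) i) + t ^ 2 * ∑ i, X i k ^ 2 := by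
  have hmul : ∀ i, (X *ᵥ (β + Pi.single k t)) i = (X *ᵥ β) i + X i k * t := fun i => by
    simp [mulVec_add, mul_comm]
  simp only [residualSumSq, hmul, Finset.mul_sum, ← Finset.sum_sub_distrib,
    ← Finset.sum_add_distrib]
  exact Finset.sum_congr rfl fun i _ => by ring

lemma adaCnetObjective_add_single (hQ : Q.IsSymm) {β : κ → ℝ} {k : κ} {t : ℝ}
    (ht : |t| ≤ |β k|) :
    adaCnetObjective X y Q l1 l2 w (β + Pi.single k t) = adaCnetObjective X y Q l1 l2 w β
      + t * (2 * l2 * (Q *ᵥ β) k + l1 * w k * Real.sign (β k)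
        - 2 * ∑ i, X i k * (y i - (X *ᵥ β) i))
      + t ^ 2 * (∑ i, X i k ^ 2 + l2 * Q k k) := by
  simp only [adaCnetObjective, residualSumSq_add_single, dotProduct_mulVec_add_single hQ,
    sum_mul_abs_add_single w β ht]
  ring

theorem adaCnet_stationary (hQ : Q.IsSymm) {βh : κ → ℝ}
    (hmin : ∀ β, adaCnetObjective X y Q l1 l2 w βh ≤ adaCnetObjective X y Q l1 l2 w β)
    {k : κ} (hk : βh k ≠ 0) :
    2 * l2 * (Q *ᵥ βh) k + l1 * w k * Real.sign (βh k)
      = 2 * ∑ i, X i k * (y i - (X *ᵥ βh) i) := by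
  have h := eq_zero_of_forall_abs_le_nonneg_quadratic (A := ∑ i, X i k ^ 2 + l2 * Q k k)
    (B := 2 * l2 * (Q *ᵥ βh) k + l1 * w k * Real.sign (βh k)
      - 2 * ∑ i, X i k * (y i - (X *ᵥ βh) i)) (abs_pos.2 hk) fun t ht => by
    have := hmin (βh + Pi.single k t)
    rw [adaCnetObjective_add_single X y l1 l2 w hQ ht] at this
    linarith
  linarith

end AdaCnet

section Grouping

variable {ι κ : Type*} [Fintype ι] [Fintype κ] [DecidableEq κ]

theorem adaCnet_grouping_of_compoundSymm (X : Matrix ι κ ℝ) (y : ι → ℝ) {Q : Matrix κ κ ℝ}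
    {d o l1 l2 : ℝ} {w : κ → ℝ} (hdiag : ∀ k, Q k k = d) (hoff : ∀ k l, k ≠ l → Q k l = o)
    (hQ : ∀ β, 0 ≤ β ⬝ᵥ Q *ᵥ β) (hl1 : 0 ≤ l1) (hl2 : 0 ≤ l2) (hdo : 0 ≤ d - o)
    (hw : ∀ k, 0 ≤ w k) {βh : κ → ℝ}
    (hmin : ∀ β, adaCnetObjective X y Q l1 l2 w βh ≤ adaCnetObjective X y Q l1 l2 w β)
    {i j : κ} (hsign : 0 < βh i * βh j) :
    2 * l2 * (d - o) * |βh i - βh j|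
      ≤ 2 * (√(∑ a, (X a i - X a j) ^ 2) * √(∑ a, y a ^ 2)) + l1 * |w i - w j| := by
  have hQsymm := isSymm_of_apply_of_ne hoff
  have hi := adaCnet_stationary X y l1 l2 w hQsymm hmin (left_ne_zero_of_mul hsign.ne')
  have hj := adaCnet_stationary X y l1 l2 w hQsymm hmin (right_ne_zero_of_mul hsign.ne')
  rw [mulVec_apply_of_compoundSymm hdiag hoff, Real.sign_eq_sign_of_mul_pos_s17 hsign] at hi
  rw [mulVec_apply_of_compoundSymm hdiag hoff] at hj
  have hdiff : 2 * l2 * (d - o) * (βh i - βh j)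
      = 2 * ∑ a, (X a i - X a j) * (y a - (X *ᵥ βh) a) - l1 * Real.sign (βh j) * (w i - w j) := by
    simp only [sub_mul, Finset.sum_sub_distrib]
    linarith
  have hrss := residualSumSq_le_sum_sq X y l1 l2 w hl1 hl2 hw hQ (hmin 0)
  calc 2 * l2 * (d - o) * |βh i - βh j| = |2 * l2 * (d - o) * (βh i - βh j)| := by
        rw [abs_mul, abs_of_nonneg (mul_nonneg (mul_nonneg two_pos.le hl2) hdo)]
    _ ≤ |2 * ∑ a, (X a i - X a j) * (y a - (X *ᵥ βh) a)|
          + |l1 * Real.sign (βh j) * (w i - w j)| := hdiff ▸ abs_sub _ _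
    _ ≤ 2 * (√(∑ a, (X a i - X a j) ^ 2) * √(∑ a, y a ^ 2)) + l1 * |w i - w j| := by
        rw [abs_mul, abs_mul, abs_mul, abs_two, abs_of_nonneg hl1, mul_assoc l1]
        gcongr
        · exact (Real.abs_sum_mul_le_sqrt_mul_sqrt_s17 _ _ _).trans
            (mul_le_mul_of_nonneg_left (Real.sqrt_le_sqrt hrss) (Real.sqrt_nonneg _))
        · exact mul_le_of_le_one_left (abs_nonneg _) (Real.abs_sign_le_one _)

end Grouping

theorem stmt_17_general {n p : ℕ} (X : Matrix (Fin n) (Fin p) ℝ) (y : Fin n → ℝ)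
    (hy : 0 < ∑ i, (y i) ^ 2)
    (ρ : ℝ) (hρ : ρ ^ 2 ≠ 1)
    (hstd : ∀ k, ∑ i, (X i k) ^ 2 = 1)
    (hcorr : ∀ k l, k ≠ l → ∑ i, X i k * X i l = ρ)
    (Q : Matrix (Fin p) (Fin p) ℝ)
    (hdiag : ∀ k, Q k k = 2 * ((p : ℝ) - 1) / (1 - ρ ^ 2))
    (hoff : ∀ k l, k ≠ l → Q k l = -2 * ρ / (1 - ρ ^ 2))
    (l1 l2 γ : ℝ) (hl1 : 0 < l1) (hl2 : 0 < l2) (hγ : 0 < γ)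
    (β0 : Fin p → ℝ) (i j : Fin p) (hij : i ≠ j)
    (h0i : β0 i ≠ 0) (h0j : β0 j ≠ 0)
    (w : Fin p → ℝ) (hwdef : ∀ k, w k = |β0 k| ^ (-γ))
    (βh : Fin p → ℝ)
    (hmin : ∀ β : Fin p → ℝ,
      (∑ i', (y i' - X.mulVec βh i') ^ 2) + l2 * (∑ a, βh a * Q.mulVec βh a) +
          l1 * ∑ k, w k * |βh k| ≤
        (∑ i', (y i' - X.mulVec β i') ^ 2) + l2 * (∑ a, β a * Q.mulVec β a) +
          l1 * ∑ k, w k * |β k|)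
    (hsign : 0 < βh i * βh j) :
    1 / Real.sqrt (∑ i', (y i') ^ 2) * |βh j - βh i| ≤
      (1 - ρ ^ 2) / (2 * ((p : ℝ) + ρ - 1) * l2) *
        (Real.sqrt (2 * (1 - ρ)) +
          γ * l1 / (Real.sqrt (∑ i', (y i') ^ 2) * (min |β0 i| |β0 j|) ^ (γ + 1)) *
            |β0 i - β0 j|) := by
  have : Nontrivial (Fin p) := nontrivial_of_ne i j hij
  have hp : (2 : ℝ) ≤ p := by exact_mod_cast Fintype.card_fin p ▸ Fintype.one_lt_card
  have hρ1 : ρ ^ 2 < 1 :=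
    (sq_le_one_of_sum_sq_eq_one (hstd i) (hstd j) (hcorr i j hij)).lt_of_ne hρ
  have hK : 0 < 2 * ((p : ℝ) + ρ - 1) / (1 - ρ ^ 2) := div_pos (by nlinarith) (by linarith)
  have hdo : 2 * ((p : ℝ) - 1) / (1 - ρ ^ 2) - -2 * ρ / (1 - ρ ^ 2)
      = 2 * ((p : ℝ) + ρ - 1) / (1 - ρ ^ 2) := by ring
  have hgroup := adaCnet_grouping_of_compoundSymm X y hdiag hoff
    (dotProduct_mulVec_nonneg_of_corrPenalty hρ1 (by rwa [Fintype.card_fin]) hoff)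
    hl1.le hl2.le (hdo ▸ hK.le) (fun k => hwdef k ▸ by positivity) hmin hsign
  rw [hdo, sum_sub_sq_eq_of_sum_sq_eq_one (hstd i) (hstd j) (hcorr i j hij), hwdef, hwdef]
    at hgroup
  have hw := abs_abs_rpow_neg_sub_le hγ.le h0i h0j
  have hm : 0 < min |β0 i| |β0 j| := lt_min (abs_pos.2 h0i) (abs_pos.2 h0j)
  have hny : √(∑ a, y a ^ 2) ≠ 0 := (Real.sqrt_pos.2 hy).ne'
  -- the stated bound is loose by a factor 2 in the weight term
  calc 1 / √(∑ a, y a ^ 2) * |βh j - βh i|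
      ≤ 1 / √(∑ a, y a ^ 2) * ((2 * (√(2 * (1 - ρ)) * √(∑ a, y a ^ 2))
          + 2 * (l1 * (γ * min |β0 i| |β0 j| ^ (-(γ + 1)) * |β0 i - β0 j|)))
          / (2 * l2 * (2 * ((p : ℝ) + ρ - 1) / (1 - ρ ^ 2)))) := by
        gcongr
        rw [abs_sub_comm, le_div_iff₀ (by positivity)]
        have : 0 ≤ l1 * (γ * min |β0 i| |β0 j| ^ (-(γ + 1)) * |β0 i - β0 j|) := by positivity
        linarith [mul_le_mul_of_nonneg_left hw hl1.le]
    _ = _ := by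
        rw [Real.rpow_neg hm.le]
        field_simp [hny]

theorem stmt_17 {n p : ℕ} (X : Matrix (Fin n) (Fin p) ℝ) (y : Fin n → ℝ)
    (hcent : ∑ i, y i = 0) (hy : 0 < ∑ i, (y i) ^ 2)
    (ρ : ℝ) (hρ : ρ ^ 2 ≠ 1)
    (hstd : ∀ k, ∑ i, (X i k) ^ 2 = 1)
    (hcorr : ∀ k l, k ≠ l → ∑ i, X i k * X i l = ρ)
    (Q : Matrix (Fin p) (Fin p) ℝ)
    (hdiag : ∀ k, Q k k = 2 * ((p : ℝ) - 1) / (1 - ρ ^ 2))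
    (hoff : ∀ k l, k ≠ l → Q k l = -2 * ρ / (1 - ρ ^ 2))
    (l1 l2 γ : ℝ) (hl1 : 0 < l1) (hl2 : 0 < l2) (hγ : 0 < γ)
    (β0 : Fin p → ℝ) (i j : Fin p) (hij : i ≠ j)
    (h0i : β0 i ≠ 0) (h0j : β0 j ≠ 0)
    (w : Fin p → ℝ) (hwdef : ∀ k, w k = |β0 k| ^ (-γ))
    (βh : Fin p → ℝ)
    (hmin : ∀ β : Fin p → ℝ,
      (∑ i', (y i' - X.mulVec βh i') ^ 2) + l2 * (∑ a, βh a * Q.mulVec βh a) +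
          l1 * ∑ k, w k * |βh k| ≤
        (∑ i', (y i' - X.mulVec β i') ^ 2) + l2 * (∑ a, β a * Q.mulVec β a) +
          l1 * ∑ k, w k * |β k|)
    (hsign : 0 < βh i * βh j) :
    1 / Real.sqrt (∑ i', (y i') ^ 2) * |βh j - βh i| ≤
      (1 - ρ ^ 2) / (2 * ((p : ℝ) + ρ - 1) * l2) *
        (Real.sqrt (2 * (1 - ρ)) +
          γ * l1 / (Real.sqrt (∑ i', (y i') ^ 2) * (min |β0 i| |β0 j|) ^ (γ + 1)) *
            |β0 i - β0 j|) :=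
  stmt_17_general X y hy ρ hρ hstd hcorr Q hdiag hoff l1 l2 γ hl1 hl2 hγ β0 i j hij h0i h0j w hwdef
    βh hmin hsign
end

section
/- Deterministic form of the sparsity error bound: suppose XᵀX + λ₂Q is invertible with smallest eigenvalue at least bn + λ₂d > 0 and λ_max((1/n)XᵀX) ≤ B. Then for any minimizer β̂ of ‖y − Xβ‖₂² + λ₂βᵀQβ + λ₁‖β‖₁ with y = Xβ* + ε, one has ‖β̂ − β*‖₂ ≤ (‖λ₂Qβ*‖₂ + ‖Xᵀε‖₂ + λ₁√p)/(bn + λ₂d) up to a universal constant 2, i.e. ‖β̂ − β*‖₂² ≤ 4(λ₂²‖Qβ*‖₂² + ‖Xᵀε‖₂² + λ₁²p)/(bn + λ₂d)². -/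
/-!
Write `v = β̂ - β*`, `M = XᵀX + λ₂Q` and `g = Xᵀε - λ₂Qβ*`. Along the segment `β* + t v` the
smooth part of the loss is the quadratic `C - 2t⟨g, v⟩ + t² vᵀMv`, while the ℓ₁ part is convex.
Comparing the minimizer (`t = 1`) with the midpoint (`t = 1/2`) gives the basic inequality
`(3/2) vᵀMv ≤ 2⟨g, v⟩ + λ₁(‖β*‖₁ - ‖β̂‖₁)`. The eigenvalue bound on the left and Cauchy–Schwarz
on the right (with `‖v‖₁ ≤ √p ‖v‖₂`) give `(3/2) K ‖v‖₂ ≤ 2‖g‖₂ + λ₁√p`; squaring, with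
`‖g‖₂² ≤ 2(‖Xᵀε‖₂² + λ₂²‖Qβ*‖₂²)`, yields the constant 4.
-/

open Matrix

section
variable {ι κ : Type*} [Fintype ι] [Fintype κ]

lemma Matrix.IsSymm.dotProduct_mulVec_add_smul {A : Matrix ι ι ℝ} (hA : A.IsSymm)
    (u v : ι → ℝ) (t : ℝ) :
    (u + t • v) ⬝ᵥ A *ᵥ (u + t • v) =
      u ⬝ᵥ A *ᵥ u + 2 * t * (A *ᵥ u ⬝ᵥ v) + t ^ 2 * (v ⬝ᵥ A *ᵥ v) := by
  have hcomm : u ⬝ᵥ A *ᵥ v = A *ᵥ u ⬝ᵥ v := by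
    rw [dotProduct_mulVec, ← mulVec_transpose, hA.eq]
  simp only [mulVec_add, mulVec_smul, add_dotProduct, dotProduct_add, smul_dotProduct,
    dotProduct_smul, smul_eq_mul, hcomm, dotProduct_comm v (A *ᵥ u)]
  ring

lemma dotProduct_sub_smul_mulVec_self (X : Matrix κ ι ℝ) (ε : κ → ℝ) (v : ι → ℝ) (t : ℝ) :
    (ε - t • X *ᵥ v) ⬝ᵥ (ε - t • X *ᵥ v) =
      ε ⬝ᵥ ε - 2 * t * (Xᵀ *ᵥ ε ⬝ᵥ v) + t ^ 2 * (v ⬝ᵥ (Xᵀ * X) *ᵥ v) := by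
  have hcross : ε ⬝ᵥ X *ᵥ v = Xᵀ *ᵥ ε ⬝ᵥ v := by rw [dotProduct_mulVec, mulVec_transpose]
  have hgram : X *ᵥ v ⬝ᵥ X *ᵥ v = v ⬝ᵥ (Xᵀ * X) *ᵥ v := by
    rw [← mulVec_mulVec, dotProduct_mulVec v, vecMul_transpose]
  simp only [sub_dotProduct, dotProduct_sub, smul_dotProduct, dotProduct_smul, smul_eq_mul,
    hcross, hgram, dotProduct_comm (X *ᵥ v) ε]
  ring

def penalizedLoss (X : Matrix κ ι ℝ) (Q : Matrix ι ι ℝ) (l1 l2 : ℝ) (y : κ → ℝ)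
    (β : ι → ℝ) : ℝ :=
  (y - X *ᵥ β) ⬝ᵥ (y - X *ᵥ β) + l2 * (β ⬝ᵥ Q *ᵥ β) + l1 * ∑ k, |β k|

lemma penalizedLoss_add_smul (X : Matrix κ ι ℝ) {Q : Matrix ι ι ℝ} (hQ : Q.IsSymm)
    (l1 l2 : ℝ) (βs v : ι → ℝ) (ε : κ → ℝ) (t : ℝ) :
    penalizedLoss X Q l1 l2 (X *ᵥ βs + ε) (βs + t • v) =
      ε ⬝ᵥ ε + l2 * (βs ⬝ᵥ Q *ᵥ βs) - 2 * t * ((Xᵀ *ᵥ ε - l2 • Q *ᵥ βs) ⬝ᵥ v)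
        + t ^ 2 * (v ⬝ᵥ (Xᵀ * X + l2 • Q) *ᵥ v) + l1 * ∑ k, |βs k + t * v k| := by
  have hres : X *ᵥ βs + ε - X *ᵥ (βs + t • v) = ε - t • X *ᵥ v := by
    rw [mulVec_add, mulVec_smul]; abel
  rw [penalizedLoss, hres, dotProduct_sub_smul_mulVec_self, hQ.dotProduct_mulVec_add_smul]
  simp only [add_mulVec, smul_mulVec, dotProduct_add, dotProduct_smul, sub_dotProduct,
    smul_dotProduct, smul_eq_mul, Pi.add_apply, Pi.smul_apply]
  ring

lemma sum_abs_add_half_le (u v : ι → ℝ) :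
    ∑ k, |u k + 2⁻¹ * v k| ≤ (∑ k, |u k| + ∑ k, |u k + v k|) / 2 := by
  rw [← Finset.sum_add_distrib, Finset.sum_div]
  refine Finset.sum_le_sum fun k _ => ?_
  calc |u k + 2⁻¹ * v k| = |u k + (u k + v k)| / 2 := by
        rw [← abs_of_pos (two_pos : (0 : ℝ) < 2), ← abs_div]; ring_nf
    _ ≤ (|u k| + |u k + v k|) / 2 := by gcongr; exact abs_add_le _ _

lemma sum_abs_sub_sum_abs_le (u w : ι → ℝ) :
    ∑ k, |u k| - ∑ k, |w k| ≤ √(Fintype.card ι) * √(∑ k, (w k - u k) ^ 2) := by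
  calc ∑ k, |u k| - ∑ k, |w k| ≤ ∑ k, 1 * |w k - u k| := by
        rw [← Finset.sum_sub_distrib]
        refine Finset.sum_le_sum fun k _ => ?_
        rw [one_mul, abs_sub_comm]
        exact abs_sub_abs_le_abs_sub _ _
    _ ≤ √(∑ _k : ι, 1 ^ 2) * √(∑ k, |w k - u k| ^ 2) := Real.sum_mul_le_sqrt_mul_sqrt _ _ _
    _ = √(Fintype.card ι) * √(∑ k, (w k - u k) ^ 2) := by simp

theorem penalizedLoss_basic_inequality (X : Matrix κ ι ℝ) {Q : Matrix ι ι ℝ} (hQ : Q.IsSymm)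
    {l1 : ℝ} (hl1 : 0 ≤ l1) (l2 : ℝ) (βs βh : ι → ℝ) (ε : κ → ℝ)
    (hmin : penalizedLoss X Q l1 l2 (X *ᵥ βs + ε) βh ≤
      penalizedLoss X Q l1 l2 (X *ᵥ βs + ε) (βs + (2⁻¹ : ℝ) • (βh - βs))) :
    3 / 2 * ((βh - βs) ⬝ᵥ (Xᵀ * X + l2 • Q) *ᵥ (βh - βs)) ≤
      2 * ((Xᵀ *ᵥ ε - l2 • Q *ᵥ βs) ⬝ᵥ (βh - βs)) + l1 * (∑ k, |βs k| - ∑ k, |βh k|) := by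
  obtain ⟨v, rfl⟩ : ∃ v, βh = βs + v := ⟨βh - βs, by abel⟩
  have hend := penalizedLoss_add_smul X hQ l1 l2 βs v ε 1
  have hmid := penalizedLoss_add_smul X hQ l1 l2 βs v ε 2⁻¹
  have hconv := mul_le_mul_of_nonneg_left (sum_abs_add_half_le βs v) hl1
  simp only [add_sub_cancel_left, one_smul, one_mul, Pi.add_apply] at hmin hend ⊢
  linarith

lemma sum_sub_sq_le (a b : ι → ℝ) :
    ∑ i, (a i - b i) ^ 2 ≤ 2 * (∑ i, a i ^ 2 + ∑ i, b i ^ 2) := by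
  rw [← Finset.sum_add_distrib, Finset.mul_sum]
  exact Finset.sum_le_sum fun i _ => by nlinarith [sq_nonneg (a i + b i)]

lemma two_mul_add_sq_le (x y : ℝ) : (2 * x + y) ^ 2 ≤ 9 / 2 * x ^ 2 + 9 * y ^ 2 := by
  nlinarith [sq_nonneg (x - 4 * y)]

lemma sq_mul_le_sq_of_mul_sq_le {K s c : ℝ} (hK : 0 ≤ K) (hs : 0 ≤ s)
    (h : K * s ^ 2 ≤ c * s) : (K * s) ^ 2 ≤ c ^ 2 := by
  rcases hs.eq_or_lt with rfl | hs
  · simpa using sq_nonneg c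
  · have : K * s ≤ c := le_of_mul_le_mul_right (by linarith) hs
    exact pow_le_pow_left₀ (by positivity) this 2

theorem penalizedLoss_error_bound (X : Matrix κ ι ℝ) {Q : Matrix ι ι ℝ} (hQ : Q.IsSymm)
    {l1 : ℝ} (hl1 : 0 ≤ l1) (l2 : ℝ) {K : ℝ} (hK : 0 ≤ K)
    (heig : ∀ v : ι → ℝ, K * ∑ j, v j ^ 2 ≤ v ⬝ᵥ (Xᵀ * X + l2 • Q) *ᵥ v)
    (βs βh : ι → ℝ) (ε : κ → ℝ)
    (hmin : ∀ β, penalizedLoss X Q l1 l2 (X *ᵥ βs + ε) βh ≤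
      penalizedLoss X Q l1 l2 (X *ᵥ βs + ε) β) :
    K ^ 2 * ∑ j, (βh j - βs j) ^ 2 ≤
      4 * (l2 ^ 2 * ∑ j, (Q *ᵥ βs) j ^ 2 + ∑ j, (Xᵀ *ᵥ ε) j ^ 2 + l1 ^ 2 * Fintype.card ι) := by
  set g := Xᵀ *ᵥ ε - l2 • Q *ᵥ βs
  set s := √(∑ j, (βh j - βs j) ^ 2)
  set G := ∑ j, g j ^ 2
  have hs : s ^ 2 = ∑ j, (βh j - βs j) ^ 2 := Real.sq_sqrt (by positivity)
  have hgrad : g ⬝ᵥ (βh - βs) ≤ √G * s := Real.sum_mul_le_sqrt_mul_sqrt _ _ _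
  have hell1 := mul_le_mul_of_nonneg_left (sum_abs_sub_sum_abs_le βs βh) hl1
  have hbasic := penalizedLoss_basic_inequality X hQ hl1 l2 βs βh ε (hmin _)
  have hcurv : K * s ^ 2 ≤ (βh - βs) ⬝ᵥ (Xᵀ * X + l2 • Q) *ᵥ (βh - βs) := hs ▸ heig _
  have hlin : 3 / 2 * K * s ^ 2 ≤ (2 * √G + l1 * √(Fintype.card ι)) * s := by linarith
  have hG : G ≤ 2 * (∑ j, (Xᵀ *ᵥ ε) j ^ 2 + l2 ^ 2 * ∑ j, (Q *ᵥ βs) j ^ 2) := by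
    simpa [G, g, mul_pow, ← Finset.mul_sum] using sum_sub_sq_le (Xᵀ *ᵥ ε) (l2 • Q *ᵥ βs)
  calc K ^ 2 * ∑ j, (βh j - βs j) ^ 2 = 4 / 9 * (3 / 2 * K * s) ^ 2 := by rw [← hs]; ring
    _ ≤ 4 / 9 * (2 * √G + l1 * √(Fintype.card ι)) ^ 2 := by
        gcongr 4 / 9 * ?_
        exact sq_mul_le_sq_of_mul_sq_le (by positivity) (Real.sqrt_nonneg _) hlin
    _ ≤ 4 / 9 * (9 / 2 * √G ^ 2 + 9 * (l1 * √(Fintype.card ι)) ^ 2) := by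
        gcongr; exact two_mul_add_sq_le _ _
    _ ≤ _ := by
        rw [mul_pow, Real.sq_sqrt (by positivity), Real.sq_sqrt (by positivity)]
        linarith

end

theorem stmt_19_general {n p : ℕ} (X : Matrix (Fin n) (Fin p) ℝ)
    (Q : Matrix (Fin p) (Fin p) ℝ) (hQ : Q.PosSemidef)
    (l1 l2 b d : ℝ) (hl1 : 0 ≤ l1)
    (hpos : 0 < b * n + l2 * d)
    (heig : ∀ v : Fin p → ℝ,
      (b * n + l2 * d) * ∑ j, (v j) ^ 2 ≤
        ∑ j, v j * ((X.transpose * X + l2 • Q).mulVec v) j)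
    (βs : Fin p → ℝ) (ε : Fin n → ℝ) (βh : Fin p → ℝ)
    (hmin : ∀ β : Fin p → ℝ,
      (∑ i, (X.mulVec βs i + ε i - X.mulVec βh i) ^ 2) +
          l2 * (∑ a, βh a * Q.mulVec βh a) + l1 * ∑ k, |βh k| ≤
        (∑ i, (X.mulVec βs i + ε i - X.mulVec β i) ^ 2) +
          l2 * (∑ a, β a * Q.mulVec β a) + l1 * ∑ k, |β k|) :
    ∑ j, (βh j - βs j) ^ 2 ≤
      4 * (l2 ^ 2 * (∑ j, (Q.mulVec βs j) ^ 2) +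
            (∑ j, (X.transpose.mulVec ε j) ^ 2) + l1 ^ 2 * p) /
        (b * n + l2 * d) ^ 2 := by
  have hQsymm : Q.IsSymm := isHermitian_iff_isSymm.mp hQ.isHermitian
  have hminimizer : ∀ β, penalizedLoss X Q l1 l2 (X *ᵥ βs + ε) βh ≤
      penalizedLoss X Q l1 l2 (X *ᵥ βs + ε) β := by
    simpa only [penalizedLoss, dotProduct, sq, Pi.sub_apply, Pi.add_apply] using hmin
  rw [le_div_iff₀ (by positivity), mul_comm]
  simpa using penalizedLoss_error_bound X hQsymm hl1 l2 hpos.le heig βs βh ε hminimizer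

theorem stmt_19 {n p : ℕ} (X : Matrix (Fin n) (Fin p) ℝ)
    (Q : Matrix (Fin p) (Fin p) ℝ) (hQ : Q.PosSemidef)
    (l1 l2 b d B : ℝ) (hl1 : 0 ≤ l1) (hl2 : 0 ≤ l2)
    (hpos : 0 < b * n + l2 * d)
    (heig : ∀ v : Fin p → ℝ,
      (b * n + l2 * d) * ∑ j, (v j) ^ 2 ≤
        ∑ j, v j * ((X.transpose * X + l2 • Q).mulVec v) j)
    (hunit : IsUnit (X.transpose * X + l2 • Q))
    (hBmax : ∀ v : Fin p → ℝ, ∑ i, (X.mulVec v i) ^ 2 ≤ B * n * ∑ j, (v j) ^ 2)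
    (βs : Fin p → ℝ) (ε : Fin n → ℝ) (βh : Fin p → ℝ)
    (hmin : ∀ β : Fin p → ℝ,
      (∑ i, (X.mulVec βs i + ε i - X.mulVec βh i) ^ 2) +
          l2 * (∑ a, βh a * Q.mulVec βh a) + l1 * ∑ k, |βh k| ≤
        (∑ i, (X.mulVec βs i + ε i - X.mulVec β i) ^ 2) +
          l2 * (∑ a, β a * Q.mulVec β a) + l1 * ∑ k, |β k|) :
    ∑ j, (βh j - βs j) ^ 2 ≤
      4 * (l2 ^ 2 * (∑ j, (Q.mulVec βs j) ^ 2) +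
            (∑ j, (X.transpose.mulVec ε j) ^ 2) + l1 ^ 2 * p) /
        (b * n + l2 * d) ^ 2 :=
  stmt_19_general X Q hQ l1 l2 b d hl1 hpos heig βs ε βh hmin
end
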